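/- arXiv:2207.09522 — 2 statements merged into one kernel-verified Lean document; each statement's English description precedes it below -/
import Mathlib

section
/- With A_ρ̂ and B^ω defined as above on ℂ[W] via homomorphisms d^{-1}: V → W and d^0: W → U satisfying d^0 ∘ d^{-1} = 0, the operators commute pairwise: A_ρ̂ B^ω = B^ω A_ρ̂ for all ρ̂ ∈ V̂ and ω ∈ U. -/
/-! `A_ρ̂` and `B^ω` are linear combinations of the shifts `P^{d⁻¹ α}` and the clocks
`Q_{β̂ ∘ d⁰}`, and each such shift commutes with each such clock because
`β̂ (d⁰ (d⁻¹ α)) = β̂ 0 = 1`. -/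

variable {V W U : Type*} [AddCommGroup V] [Fintype V] [DecidableEq V]
  [AddCommGroup W] [Fintype W] [DecidableEq W]
  [AddCommGroup U] [Fintype U] [DecidableEq U]

/-- The shift operator `P^w : |ω⟩ ↦ |ω + w⟩` on `ℂ[W]`. -/
noncomputable def shiftOp (w : W) : EuclideanSpace ℂ W →ₗ[ℂ] EuclideanSpace ℂ W :=
  (EuclideanSpace.equiv W ℂ).symm.toLinearMap ∘ₗ
    (LinearMap.funLeft ℂ ℂ (fun x => x - w)) ∘ₗ (EuclideanSpace.equiv W ℂ).toLinearMap

/-- The clock operator `Q_χ : |ν⟩ ↦ χ(ν)|ν⟩` on `ℂ[W]`. -/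
noncomputable def clockOp (χ : AddChar W ℂˣ) :
    EuclideanSpace ℂ W →ₗ[ℂ] EuclideanSpace ℂ W :=
  (EuclideanSpace.equiv W ℂ).symm.toLinearMap ∘ₗ
    { toFun := fun f x => ((χ x : ℂˣ) : ℂ) * f x
      map_add' := by intro f g; funext x; simp [mul_add]
      map_smul' := by intro c f; funext x; simp [smul_eq_mul]; ring } ∘ₗ
    (EuclideanSpace.equiv W ℂ).toLinearMap

/-- The fake-gauge operator `A_ρ̂ := (1/|V|) Σ_{α∈V} ρ̂(α)⁻¹ P^{d⁻¹ α}`. -/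
noncomputable def gaugeOp (d : V →+ W) (ρ : AddChar V ℂˣ) :
    EuclideanSpace ℂ W →ₗ[ℂ] EuclideanSpace ℂ W :=
  (Fintype.card V : ℂ)⁻¹ • ∑ α : V, ((((ρ α)⁻¹ : ℂˣ) : ℂ)) • shiftOp (d α)

/-- The fake-holonomy operator `B^ω := (1/|Û|) Σ_{β̂∈Û} β̂(ω)⁻¹ Q_{β̂∘d⁰}`. -/
noncomputable def holOp [Fintype (AddChar U ℂˣ)] (d : W →+ U) (ω : U) :
    EuclideanSpace ℂ W →ₗ[ℂ] EuclideanSpace ℂ W :=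
  (Fintype.card (AddChar U ℂˣ) : ℂ)⁻¹ •
    ∑ β : AddChar U ℂˣ, ((((β ω)⁻¹ : ℂˣ) : ℂ)) • clockOp (β.compAddMonoidHom d)

omit [Fintype W] [DecidableEq W] in
theorem commute_shiftOp_clockOp {w : W} {χ : AddChar W ℂˣ} (hw : χ w = 1) :
    Commute (shiftOp w) (clockOp χ) := by
  have hχ (x : W) : χ (x - w) = χ x := by
    rw [sub_eq_add_neg, AddChar.map_add_eq_mul, AddChar.map_neg_eq_inv, hw, inv_one, mul_one]
  ext f x
  simp [Module.End.mul_apply, shiftOp, clockOp, EuclideanSpace.equiv,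
    PiLp.continuousLinearEquiv, hχ]

/-- With `d⁰ ∘ d⁻¹ = 0`, the fake-gauge and fake-holonomy operators
commute pairwise: `A_ρ̂ B^ω = B^ω A_ρ̂` for all `ρ̂ ∈ V̂` and `ω ∈ U`. -/
theorem stmt8 [Fintype (AddChar U ℂˣ)] (dm1 : V →+ W) (d0 : W →+ U)
    (hdd : d0.comp dm1 = 0) (ρ : AddChar V ℂˣ) (ω : U) :
    (gaugeOp dm1 ρ).comp (holOp d0 ω) = (holOp d0 ω).comp (gaugeOp dm1 ρ) := by
  have hd (α : V) : d0 (dm1 α) = 0 := DFunLike.congr_fun hdd α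
  have hsum : Commute (∑ α : V, (((ρ α)⁻¹ : ℂˣ) : ℂ) • shiftOp (dm1 α))
      (∑ β : AddChar U ℂˣ, (((β ω)⁻¹ : ℂˣ) : ℂ) • clockOp (β.compAddMonoidHom d0)) :=
    .sum_left _ _ _ fun α _ => .sum_right _ _ _ fun β _ =>
      ((commute_shiftOp_clockOp (by simp [hd])).smul_left _).smul_right _
  exact ((hsum.smul_left _).smul_right _).eq
end

section
/- For finite abelian groups V, W, U and homomorphisms d^{-1}: V → W, d^0: W → U with d^0∘d^{-1}=0, and dual maps d_1 = (d^0)^∨, d_0 = (d^{-1})^∨, one has |ker(d^0)/im(d^{-1})| = |ker(d_0)/im(d_1)|, so the ground state degeneracy computed in the configuration basis equals that computed in the representation basis. -/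
/-- The Pontryagin dual (transpose) of a homomorphism of abelian groups:
`f^∨ : B̂ → Â`, `χ ↦ χ ∘ f`. -/
def dualHom {A B : Type*} [AddCommGroup A] [AddCommGroup B] (f : A →+ B) :
    AddChar B ℂˣ →* AddChar A ℂˣ where
  toFun χ := χ.compAddMonoidHom f
  map_one' := by ext a; simp
  map_mul' χ₁ χ₂ := by ext a; simp

/-- `ℂˣ`-valued characters are the same as `ℂ`-valued characters. -/
noncomputable def unitsCharEquiv (A : Type*) [AddCommGroup A] :
    AddChar A ℂˣ ≃ AddChar A ℂ where
  toFun χ := (Units.coeHom ℂ).compAddChar χ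
  invFun χ := AddChar.toMonoidHomEquiv.symm (AddChar.toMonoidHomEquiv χ).toHomUnits
  left_inv χ := by ext a; simp
  right_inv χ := by ext a; rfl

instance addCharUnitsFinite (A : Type*) [AddCommGroup A] [Finite A] : Finite (AddChar A ℂˣ) :=
  Finite.of_equiv _ (unitsCharEquiv A).symm

/-- The character group of a finite abelian group has the same cardinality. -/
lemma card_addChar_units (A : Type*) [AddCommGroup A] [Finite A] :
    Nat.card (AddChar A ℂˣ) = Nat.card A := by
  cases nonempty_fintype A
  rw [Nat.card_congr (unitsCharEquiv A), Nat.card_eq_fintype_card, Nat.card_eq_fintype_card,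
    AddChar.card_eq]

/-- Characters of the quotient `B ⧸ f.range` biject with the kernel of the dual map. -/
noncomputable def kerDualEquiv {A B : Type*} [AddCommGroup A] [AddCommGroup B] (f : A →+ B) :
    AddChar (B ⧸ f.range) ℂˣ ≃ (dualHom f).ker where
  toFun χ := ⟨χ.compAddMonoidHom (QuotientAddGroup.mk' f.range), by
    rw [MonoidHom.mem_ker]
    refine DFunLike.ext _ _ fun a => ?_
    show χ ((QuotientAddGroup.mk' f.range) (f a)) = (1 : AddChar A ℂˣ) a
    rw [show (QuotientAddGroup.mk' f.range) (f a) = 0 from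
      (QuotientAddGroup.eq_zero_iff _).2 ⟨a, rfl⟩, AddChar.one_apply]
    exact χ.map_zero_eq_one⟩
  invFun χp := AddChar.toAddMonoidHomEquiv.symm <|
    QuotientAddGroup.lift f.range (AddChar.toAddMonoidHomEquiv (χp : AddChar B ℂˣ))
      (by
        rintro b ⟨a, rfl⟩
        have h : (χp : AddChar B ℂˣ) (f a) = 1 := DFunLike.congr_fun (MonoidHom.mem_ker.mp χp.2) a
        simpa using h)
  left_inv χ := by
    apply AddChar.compAddMonoidHom_injective_left _ (QuotientAddGroup.mk'_surjective f.range)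
    ext b
    rfl
  right_inv χp := by
    apply Subtype.ext
    ext b
    rfl

/-- For finite abelian groups and homomorphisms `d⁻¹ : V → W`,
`d⁰ : W → U` with `d⁰ ∘ d⁻¹ = 0`, and dual maps `d₁ = (d⁰)^∨`, `d₀ = (d⁻¹)^∨`, the orders
satisfy `|ker(d⁰)/im(d⁻¹)| = |ker(d₀)/im(d₁)|`: the ground state degeneracy computed in
the configuration basis equals that computed in the representation basis. -/
theorem stmt12 {V W U : Type*} [AddCommGroup V] [Finite V]
    [AddCommGroup W] [Finite W] [AddCommGroup U] [Finite U]
    (dm1 : V →+ W) (d0 : W →+ U) (hdd : d0.comp dm1 = 0) :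
    Nat.card (d0.ker ⧸ (dm1.range.addSubgroupOf d0.ker)) =
      Nat.card ((dualHom dm1).ker ⧸ ((dualHom d0).range.subgroupOf (dualHom dm1).ker)) := by
  have hle : dm1.range ≤ d0.ker := by
    rintro w ⟨v, rfl⟩
    simpa using DFunLike.congr_fun hdd v
  have hle' : (dualHom d0).range ≤ (dualHom dm1).ker := by
    rintro χ ⟨ψ, rfl⟩
    rw [MonoidHom.mem_ker]
    refine DFunLike.ext _ _ fun v => ?_
    show ψ (d0 (dm1 v)) = (1 : AddChar V ℂˣ) v
    have h0 : d0 (dm1 v) = 0 := by simpa using DFunLike.congr_fun hdd v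
    rw [h0, AddChar.one_apply]
    exact ψ.map_zero_eq_one
  set a := Nat.card (d0.ker ⧸ (dm1.range.addSubgroupOf d0.ker)) with ha
  set b := Nat.card ((dualHom dm1).ker ⧸ ((dualHom d0).range.subgroupOf (dualHom dm1).ker)) with hb
  have h1 : Nat.card d0.ker = a * Nat.card dm1.range := by
    rw [AddSubgroup.card_eq_card_quotient_mul_card_addSubgroup
      (dm1.range.addSubgroupOf d0.ker), ha,
      Nat.card_congr (AddSubgroup.addSubgroupOfEquivOfLe hle).toEquiv]
  have h2 : Nat.card (dualHom dm1).ker = b * Nat.card (dualHom d0).range := by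
    rw [Subgroup.card_eq_card_quotient_mul_card_subgroup
      ((dualHom d0).range.subgroupOf (dualHom dm1).ker), hb,
      Nat.card_congr (Subgroup.subgroupOfEquivOfLe hle').toEquiv]
  have h3 : Nat.card W = Nat.card d0.range * Nat.card d0.ker := by
    rw [AddSubgroup.card_eq_card_quotient_mul_card_addSubgroup d0.ker,
      Nat.card_congr (QuotientAddGroup.quotientKerEquivRange d0).toEquiv]
  have h4 : Nat.card (dualHom dm1).ker = Nat.card (W ⧸ dm1.range) :=
    (Nat.card_congr (kerDualEquiv dm1)).symm.trans (card_addChar_units _)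
  have h4' : Nat.card (dualHom d0).ker = Nat.card (U ⧸ d0.range) :=
    (Nat.card_congr (kerDualEquiv d0)).symm.trans (card_addChar_units _)
  have h5 : Nat.card W = Nat.card (W ⧸ dm1.range) * Nat.card dm1.range :=
    AddSubgroup.card_eq_card_quotient_mul_card_addSubgroup _
  have h6 : Nat.card U = Nat.card (U ⧸ d0.range) * Nat.card d0.range :=
    AddSubgroup.card_eq_card_quotient_mul_card_addSubgroup _
  have h7 : Nat.card (AddChar U ℂˣ) =
      Nat.card (dualHom d0).range * Nat.card (dualHom d0).ker := by
    rw [Subgroup.card_eq_card_quotient_mul_card_subgroup (dualHom d0).ker,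
      Nat.card_congr (QuotientGroup.quotientKerEquivRange (dualHom d0)).toEquiv]
  have h8 : Nat.card (dualHom d0).range = Nat.card d0.range := by
    have hpos : 0 < Nat.card (U ⧸ d0.range) := Nat.card_pos
    refine Nat.eq_of_mul_eq_mul_right hpos ?_
    have := h7
    rw [card_addChar_units, h4', h6] at this
    rw [mul_comm (Nat.card (U ⧸ d0.range)) (Nat.card d0.range)] at this
    linarith [this]
  have hR : 0 < Nat.card dm1.range := Nat.card_pos
  have hS : 0 < Nat.card d0.range := Nat.card_pos
  have key : a * (Nat.card dm1.range * Nat.card d0.range) =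
      b * (Nat.card dm1.range * Nat.card d0.range) := by
    have e1 : Nat.card W = a * Nat.card dm1.range * Nat.card d0.range := by
      rw [h3, h1]; ring
    have e2 : Nat.card W = b * Nat.card d0.range * Nat.card dm1.range := by
      rw [h5, ← h4, h2, h8]
    calc a * (Nat.card dm1.range * Nat.card d0.range)
        = Nat.card W := by rw [e1]; ring
      _ = b * (Nat.card dm1.range * Nat.card d0.range) := by rw [e2]; ring
  exact Nat.eq_of_mul_eq_mul_right (Nat.mul_pos hR hS) key
end
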